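/- arXiv:1510.03573 — 6 statements merged into one kernel-verified Lean document; each statement's English description precedes it below -/
import Mathlib

section
/- Let (A, m, k) be a complete local ring and B = A[[X]]. Let f = Σ a_i X^i ∈ B be nonzero, and suppose there exists n ∈ ℕ such that a_i ∈ m for all i < n and a_n ∉ m. Then f = u·f₀ where u is a unit of B and f₀ is a distinguished polynomial of degree n (i.e., f₀ = X^n + c_{n-1}X^{n-1} + ... + c₀ with all c_i ∈ m), and u and f₀ are uniquely determined by f. -/
/-!
Mathlib's Weierstrass preparation factors `f` as `p * h` with `h` a unit and `p` a monic polynomial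
whose lower coefficients lie in `m`, uniquely since `A` is `m`-adically Hausdorff; the degree of
`p` is the order of the reduction of `f` modulo `m`, which the hypotheses make equal to `n`.
-/

open IsLocalRing PowerSeries

/-- `g` is a distinguished polynomial of degree `n` over the local ring `A`:
`g = X^n + a_{n-1} X^{n-1} + ⋯ + a_0` with all `a_i` in the maximal ideal. -/
def IsDistinguishedOfDegree {A : Type*} [CommRing A] [IsLocalRing A]
    (g : PowerSeries A) (n : ℕ) : Prop :=
  coeff n g = 1 ∧ (∀ i < n, coeff i g ∈ maximalIdeal A) ∧ ∀ i, n < i → coeff i g = 0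

section

variable {A : Type*} [CommRing A] [IsLocalRing A]

theorem isDistinguishedOfDegree_iff_exists_polynomial {g : A⟦X⟧} {n : ℕ} :
    IsDistinguishedOfDegree g n ↔
      ∃ p : Polynomial A, p.IsDistinguishedAt (maximalIdeal A) ∧ p.natDegree = n ∧ ↑p = g := by
  constructor
  · rintro ⟨hn, hlt, hgt⟩
    have hcoe : (trunc (n + 1) g : A⟦X⟧) = g := by
      ext i
      rw [Polynomial.coeff_coe, coeff_trunc]
      split_ifs with hi
      · rfl
      · exact (hgt i (by omega)).symm
    have hdeg : (trunc (n + 1) g).natDegree = n := by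
      refine Polynomial.natDegree_eq_of_le_of_coeff_ne_zero ?_ ?_
      · exact Polynomial.natDegree_le_iff_coeff_eq_zero.2 fun i hi => by
          rw [← Polynomial.coeff_coe, hcoe, hgt i (mod_cast hi)]
      · rw [← Polynomial.coeff_coe, hcoe, hn]
        exact one_ne_zero
    refine ⟨_, ⟨⟨fun {i} hi => ?_⟩, ?_⟩, hdeg, hcoe⟩
    · rw [← Polynomial.coeff_coe, hcoe]
      exact hlt i (hdeg ▸ hi)
    · rw [Polynomial.Monic, Polynomial.leadingCoeff, hdeg, ← Polynomial.coeff_coe, hcoe, hn]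
  · rintro ⟨p, hp, rfl, rfl⟩
    refine ⟨?_, fun i hi => ?_, fun i hi => ?_⟩
    · rw [Polynomial.coeff_coe, hp.monic.coeff_natDegree]
    · rw [Polynomial.coeff_coe]
      exact hp.mem hi
    · rw [Polynomial.coeff_coe, Polynomial.coeff_eq_zero_of_natDegree_lt hi]

theorem order_map_residue_eq {f : A⟦X⟧} {n : ℕ}
    (h1 : ∀ i < n, coeff i f ∈ maximalIdeal A) (h2 : coeff n f ∉ maximalIdeal A) :
    (f.map (residue A)).order = n := by
  rw [order_eq_nat, coeff_map, Ne, residue_eq_zero_iff]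
  exact ⟨h2, fun i hi => by rw [coeff_map, residue_eq_zero_iff]; exact h1 i hi⟩

end

theorem weierstrass_preparation_general
    (A : Type*) [CommRing A] [IsLocalRing A]
    [IsAdicComplete (maximalIdeal A) A]
    (f : PowerSeries A) (n : ℕ)
    (h1 : ∀ i < n, coeff i f ∈ maximalIdeal A)
    (h2 : coeff n f ∉ maximalIdeal A) :
    ∃! uf : (PowerSeries A)ˣ × PowerSeries A,
      IsDistinguishedOfDegree uf.2 n ∧ f = (uf.1 : PowerSeries A) * uf.2 := by
  have hord := order_map_residue_eq h1 h2
  have hf : f.map (residue A) ≠ 0 := fun h => by simp [h] at hord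
  obtain ⟨p₀, u₀, H⟩ := f.exists_isWeierstrassFactorization hf
  have hdeg : p₀.natDegree = n := by
    rw [H.natDegree_eq_toNat_order_map, hord, ENat.toNat_natCast]
  refine ⟨(H.isUnit.unit, p₀), ⟨?_, ?_⟩, ?_⟩
  · exact isDistinguishedOfDegree_iff_exists_polynomial.2 ⟨p₀, H.isDistinguishedAt, hdeg, rfl⟩
  · rw [IsUnit.unit_spec, mul_comm]
    exact H.eq_mul
  · rintro ⟨u, _⟩ ⟨hd, hfe⟩
    obtain ⟨p, hp, -, rfl⟩ := isDistinguishedOfDegree_iff_exists_polynomial.1 hd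
    obtain ⟨rfl, rfl⟩ := IsWeierstrassFactorization.elim ⟨hp, u.isUnit, hfe.trans (mul_comm _ _)⟩ H
    exact Prod.ext (Units.ext rfl) rfl

/-- Weierstrass preparation theorem over a complete Noetherian local ring. -/
theorem weierstrass_preparation
    (A : Type*) [CommRing A] [IsLocalRing A] [IsNoetherianRing A]
    [IsAdicComplete (maximalIdeal A) A]
    (f : PowerSeries A) (hf : f ≠ 0) (n : ℕ)
    (h1 : ∀ i < n, coeff i f ∈ maximalIdeal A)
    (h2 : coeff n f ∉ maximalIdeal A) :
    ∃! uf : (PowerSeries A)ˣ × PowerSeries A,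
      IsDistinguishedOfDegree uf.2 n ∧ f = (uf.1 : PowerSeries A) * uf.2 :=
  weierstrass_preparation_general A f n h1 h2
end

section
/- Let (A, m, k) be a d-dimensional Noetherian local ring whose maximal ideal m is minimally generated by d + h elements. Then there exist x₁, ..., x_{d+h} ∈ m such that m = (x₁, ..., x_{d+h}) and any d elements among x₁, ..., x_{d+h} form a system of parameters of A. -/
/-!
Choose the generators one at a time. The next one is taken in `m` but outside
`(x₁, …, xₙ) + m²`, so that the images in `m/m²` stay linearly independent and the final
`d + h` of them generate `m` by Nakayama; and outside every non-maximal minimal prime of every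
ideal `(xᵢ)_{i ∈ T}`, so that adjoining it to `T` lowers the dimension of every component
of `V(x_T)` other than the closed point. Prime avoidance (finitely many primes and one arbitrary
ideal) makes both requirements compatible. Then any `d` of the `xᵢ` cut out only the closed point.
-/

open IsLocalRing Order Module

theorem Ideal.IsMaximal.exists_mem_notMem_of_finite {R : Type*} [CommRing R] {M B : Ideal R}
    [M.IsMaximal] (hMB : ¬M ≤ B) {S : Set (Ideal R)} (hS : S.Finite)
    (hprime : ∀ P ∈ S, P.IsPrime) (hMS : M ∉ S) : ∃ y ∈ M, y ∉ B ∧ ∀ P ∈ S, y ∉ P := by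
  have hB : B ≠ ⊤ := fun h => hMB (h ▸ le_top)
  have hcover : ¬(M : Set R) ⊆ ⋃ I ∈ insert B S, I := by
    rw [Ideal.subset_iUnion_iff_mem_of_isMaximal_of_finite (hS.insert B) B B
      (fun I hI hIB _ => hprime I ((Set.mem_insert_iff.mp hI).resolve_left hIB)) hB hB]
    rintro (hMB' | hMS')
    · exact hMB hMB'.le
    · exact hMS hMS'
  obtain ⟨y, hyM, hy⟩ := Set.not_subset.mp hcover
  simp only [Set.mem_iUnion, Set.mem_insert_iff, exists_prop, not_exists, not_and] at hy
  exact ⟨y, hyM, fun h => hy B (Or.inl rfl) h, fun P hP h => hy P (Or.inr hP) h⟩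

namespace IsLocalRing

variable {A : Type*} [CommRing A] [IsLocalRing A]

theorem exists_toCotangent_notMem_of_ne_top {W : Submodule (ResidueField A) (CotangentSpace A)}
    (hW : W ≠ ⊤) {S : Set (Ideal A)} (hS : S.Finite) (hprime : ∀ P ∈ S, P.IsPrime)
    (hmS : maximalIdeal A ∉ S) :
    ∃ y : maximalIdeal A, (maximalIdeal A).toCotangent y ∉ W ∧ ∀ P ∈ S, (y : A) ∉ P := by
  let B : Ideal A := ((W.restrictScalars A).comap (maximalIdeal A).toCotangent).map
    (maximalIdeal A).subtype
  have hmB : ¬maximalIdeal A ≤ B := by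
    refine fun hle => hW (eq_top_iff.mpr fun v _ => ?_)
    obtain ⟨z, rfl⟩ := (maximalIdeal A).toCotangent_surjective v
    obtain ⟨z', hz', hzz'⟩ := hle z.2
    rwa [← Subtype.ext hzz']
  obtain ⟨y, hym, hyB, hyS⟩ := 
    Ideal.IsMaximal.exists_mem_notMem_of_finite hmB hS hprime hmS
  exact ⟨⟨y, hym⟩, fun hy => hyB ⟨_, hy, rfl⟩, hyS⟩

/-- `coheight P` is `dim A/P`. Only primes `P ≠ m` are constrained, which makes the condition
meaningful also for `|T| ≥ d`: there it says that no prime but `m` contains `T`. -/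
def IsInGeneralPosition (d : ℕ) (S : Finset A) : Prop :=
  ∀ T ⊆ S, ∀ P : PrimeSpectrum A, Ideal.span (T : Set A) ≤ P.asIdeal → P ≠ ⊤ →
    coheight P + T.card ≤ d

variable {d : ℕ}

theorem isInGeneralPosition_empty (hdim : ringKrullDim A ≤ d) :
    IsInGeneralPosition d (∅ : Finset A) := by
  intro T hT P _ _
  rw [Finset.subset_empty.mp hT, Finset.card_empty, Nat.cast_zero, add_zero]
  exact_mod_cast (coheight_le_krullDim P).trans hdim

theorem IsInGeneralPosition.insert [DecidableEq A] {S : Finset A} {y : A}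
    (hS : IsInGeneralPosition d S)
    (hy : ∀ T ⊆ S, ∀ Q ∈ (Ideal.span (T : Set A)).minimalPrimes, Q ≠ maximalIdeal A → y ∉ Q) :
    IsInGeneralPosition d (insert y S) := by
  intro T hT P hTP hP
  by_cases hyT : y ∈ T
  swap
  · exact hS T ((Finset.subset_insert_iff_of_notMem hyT).mp hT) P hTP hP
  have hT' : T.erase y ⊆ S := Finset.subset_insert_iff.mp hT
  obtain ⟨Q, hQmin, hQP⟩ := Ideal.exists_minimalPrimes_le
    ((Ideal.span_mono (Finset.coe_subset.mpr (Finset.erase_subset y T))).trans hTP)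
  let Q' : PrimeSpectrum A := ⟨Q, hQmin.1.1⟩
  have hQ'top : Q' ≠ ⊤ := fun h => hP (top_le_iff.mp (h ▸ hQP))
  have hyP : y ∈ P.asIdeal := hTP (Ideal.subset_span hyT)
  have hQ'P : Q' < P := lt_of_le_of_ne hQP fun h =>
    hy _ hT' Q hQmin (fun hQ => hQ'top (PrimeSpectrum.ext hQ)) (by rwa [← h] at hyP)
  calc coheight P + T.card = coheight P + 1 + (T.erase y).card := by
        rw [← Finset.card_erase_add_one hyT]; push_cast; ring
    _ ≤ coheight Q' + (T.erase y).card := by gcongr; exact coheight_add_one_le hQ'P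
    _ ≤ d := hS _ hT' Q' hQmin.1.2 hQ'top

theorem IsInGeneralPosition.radical_span_eq {S T : Finset A} (hS : IsInGeneralPosition d S)
    (hSm : (S : Set A) ⊆ maximalIdeal A) (hTS : T ⊆ S) (hT : T.card = d) :
    (Ideal.span (T : Set A)).radical = maximalIdeal A := by
  have hTm : Ideal.span (T : Set A) ≤ maximalIdeal A :=
    Ideal.span_le.mpr ((Finset.coe_subset.mpr hTS).trans hSm)
  refine le_antisymm ((Ideal.IsPrime.radical_le_iff inferInstance).mpr hTm) ?_
  rw [Ideal.radical_eq_sInf]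
  refine le_sInf fun P ⟨hTP, hP⟩ => ?_
  by_contra hmP
  have hne : (⟨P, hP⟩ : PrimeSpectrum A) ≠ ⊤ := fun h =>
    hmP (congrArg PrimeSpectrum.asIdeal h).ge
  have hcoheight := hS T hTS ⟨P, hP⟩ hTP hne
  rw [hT] at hcoheight
  have hzero : coheight (⟨P, hP⟩ : PrimeSpectrum A) = 0 := nonpos_iff_eq_zero.mp
    ((ENat.add_le_add_iff_right (ENat.natCast_ne_top d)).mp (by rwa [zero_add]))
  exact hne (isMax_iff_eq_top.mp (coheight_eq_zero.mp hzero))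

variable [IsNoetherianRing A]

theorem finrank_cotangentSpace_eq_of_minimal_generators {n : ℕ}
    (hgen : ∃ s : Finset A, s.card = n ∧ Ideal.span (s : Set A) = maximalIdeal A)
    (hmin : ∀ s : Finset A, Ideal.span (s : Set A) = maximalIdeal A → n ≤ s.card) :
    finrank (ResidueField A) (CotangentSpace A) = n := by
  rw [← spanFinrank_maximalIdeal_eq_finrank_cotangentSpace]
  obtain ⟨s, hs, hspan⟩ :=
    Submodule.FG.exists_span_finset_card_eq_spanFinrank (IsNoetherian.noetherian (maximalIdeal A))
  obtain ⟨s', hs', hspan'⟩ := hgen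
  refine le_antisymm ?_ (hs ▸ hmin s hspan)
  have := Submodule.spanFinrank_span_le_ncard_of_finite (R := A) s'.finite_toSet
  rwa [Ideal.submodule_span_eq, hspan', Set.ncard_coe_finset, hs'] at this

theorem span_image_val_eq_maximalIdeal {S : Finset (maximalIdeal A)}
    (hind : LinearIndepOn (ResidueField A) (maximalIdeal A).toCotangent (S : Set (maximalIdeal A)))
    (hcard : S.card = finrank (ResidueField A) (CotangentSpace A)) :
    Ideal.span (Subtype.val '' (S : Set (maximalIdeal A))) = maximalIdeal A := by
  have htop : Submodule.span (ResidueField A) ((maximalIdeal A).toCotangent '' S) = ⊤ := by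
    rw [Set.image_eq_range]
    exact hind.span_eq_top_of_card_eq_finrank' (by simpa using hcard)
  rw [CotangentSpace.span_image_eq_top_iff] at htop
  rw [← Ideal.submodule_span_eq, ← (maximalIdeal A).coe_subtype, ← Submodule.map_span, htop,
    Submodule.map_top, Submodule.range_subtype]

theorem exists_finset_linearIndepOn_isInGeneralPosition (hdim : ringKrullDim A ≤ d)
    {n : ℕ} (hn : n ≤ finrank (ResidueField A) (CotangentSpace A)) :
    ∃ S : Finset (maximalIdeal A), S.card = n ∧
      LinearIndepOn (ResidueField A) (maximalIdeal A).toCotangent (S : Set (maximalIdeal A)) ∧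
      IsInGeneralPosition d (S.map (Function.Embedding.subtype _)) := by
  classical
  induction n with
  | zero => exact ⟨∅, rfl, by simp, by simpa using isInGeneralPosition_empty hdim⟩
  | succ n ih =>
    obtain ⟨S, hcard, hind, hpos⟩ := ih (by omega)
    set S' := S.map (Function.Embedding.subtype _)
    let bad : Set (Ideal A) :=
      {Q | ∃ T ⊆ S', Q ∈ (Ideal.span (T : Set A)).minimalPrimes ∧ Q ≠ maximalIdeal A}
    have hbad : bad.Finite := by
      refine (S'.powerset.finite_toSet.biUnion fun T _ =>
        (Ideal.span (T : Set A)).finite_minimalPrimes_of_isNoetherianRing).subset ?_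
      rintro Q ⟨T, hT, hQ, -⟩
      exact Set.mem_biUnion (Finset.mem_coe.mpr (Finset.mem_powerset.mpr hT)) hQ
    have hW : Submodule.span (ResidueField A) ((maximalIdeal A).toCotangent '' S) ≠ ⊤ := by
      intro htop
      have hspan : finrank (ResidueField A) (CotangentSpace A) ≤
          (S.image (maximalIdeal A).toCotangent).card := by
        rw [← finrank_top (ResidueField A), ← htop, ← Finset.coe_image]
        exact finrank_span_finset_le_card _
      have := Finset.card_image_le (s := S) (f := (maximalIdeal A).toCotangent)
      omega
    obtain ⟨y, hyW, hybad⟩ := exists_toCotangent_notMem_of_ne_top hW hbad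
      (fun Q ⟨_, _, hQ, _⟩ => hQ.1.1) (fun ⟨_, _, _, h⟩ => h rfl)
    have hyS : y ∉ S := fun hy => hyW (Submodule.subset_span (Set.mem_image_of_mem _ hy))
    refine ⟨insert y S, by rw [Finset.card_insert_of_notMem hyS, hcard], ?_, ?_⟩
    · rw [Finset.coe_insert]
      exact hind.insert hyW
    · rw [Finset.map_insert]
      exact hpos.insert fun T hT Q hQ hQm => hybad Q ⟨T, hT, hQ, hQm⟩

theorem exists_finset_span_eq_maximalIdeal_isInGeneralPosition (hdim : ringKrullDim A ≤ d) :
    ∃ S : Finset A, S.card = finrank (ResidueField A) (CotangentSpace A) ∧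
      Ideal.span (S : Set A) = maximalIdeal A ∧ IsInGeneralPosition d S := by
  obtain ⟨S, hcard, hind, hpos⟩ := exists_finset_linearIndepOn_isInGeneralPosition hdim le_rfl
  refine ⟨S.map (Function.Embedding.subtype _), by rw [Finset.card_map, hcard], ?_, hpos⟩
  rw [Finset.coe_map]
  exact span_image_val_eq_maximalIdeal hind hcard

end IsLocalRing

/-- In a `d`-dimensional Noetherian local ring whose maximal ideal is minimally generated
by `d + h` elements, one can choose generators `x₁, …, x_{d+h}` of the maximal ideal such
that any `d` of them form a system of parameters. -/
theorem prime_avoidance_choice_of_generators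
    (A : Type*) [CommRing A] [IsLocalRing A] [IsNoetherianRing A]
    (d h : ℕ) (hdim : ringKrullDim A = d)
    (hgen : ∃ s : Finset A, s.card = d + h ∧ Ideal.span (s : Set A) = maximalIdeal A)
    (hmin : ∀ s : Finset A, Ideal.span (s : Set A) = maximalIdeal A → d + h ≤ s.card) :
    ∃ x : Fin (d + h) → A, Ideal.span (Set.range x) = maximalIdeal A ∧
      ∀ t : Finset (Fin (d + h)), t.card = d →
        (Ideal.span (x '' (t : Set (Fin (d + h))))).radical = maximalIdeal A := by
  obtain ⟨S, hcard, hspan, hpos⟩ := exists_finset_span_eq_maximalIdeal_isInGeneralPosition hdim.le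
  rw [finrank_cotangentSpace_eq_of_minimal_generators hgen hmin] at hcard
  let e : S ≃ Fin (d + h) := Fintype.equivFinOfCardEq (by simpa using hcard)
  let x : Fin (d + h) ↪ A := e.symm.toEmbedding.trans (Function.Embedding.subtype _)
  have hrange : Set.range x = (S : Set A) := by
    show Set.range (Subtype.val ∘ e.symm) = S
    rw [Set.range_comp, e.symm.range_eq_univ, Set.image_univ, Subtype.range_coe]
  refine ⟨x, hrange ▸ hspan, fun t ht => ?_⟩
  have htS : t.map x ⊆ S := by
    rw [← Finset.coe_subset, Finset.coe_map, ← hrange]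
    exact Set.image_subset_range x t
  rw [← Finset.coe_map]
  exact hpos.radical_span_eq (hspan ▸ Ideal.subset_span) htS (by rw [Finset.card_map, ht])
end

section
/- Let (A, m) be a Noetherian local ring of dimension d ≥ 1, let x₁, x_j ∈ m, and let P be a prime ideal of A with x₁ ∉ P. Then for all but at most one natural number n, x_j − x₁^n ∉ P. Consequently, if x₂,...,x_{j-1}, x_{j+1},...,x_{d+1} is part of a generating set such that any d of x₁,...,x_{d+1} form a system of parameters, then for all sufficiently large n, any d elements chosen from {x₁,...,x_{j-1}, x_j − x₁^n, x_{j+1},...,x_{d+1}} form a system of parameters of A. -/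
/-!
If `x ∈ 𝔪` and `x ^ N ∈ I + (x ^ n)` with `N < n`, then `x ^ N (1 - r x ^ (n - N)) ∈ I` for some
`r`, and the second factor is a unit; so `x ^ N ∈ I`. Applied to `I = P` this shows that
`y - x ^ a, y - x ^ b ∈ P` with `a < b` forces `x ∈ P`. Applied to the ideal generated by a
system of parameters in which `x_j` is replaced by `x_j - x₀ ^ n`, with `N` such that `x₀ ^ N` lies
in the original ideal, it shows that `x₀`, hence also `x_j`, stays in the radical.
-/

open IsLocalRing Filter

theorem Ideal.span_image_le_sup_span_singleton {R ι : Type*} [CommRing R] {f g : ι → R} {z : R}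
    {s : Set ι} (h : ∀ i ∈ s, f i - g i ∈ Ideal.span {z}) :
    Ideal.span (f '' s) ≤ Ideal.span (g '' s) ⊔ Ideal.span {z} := by
  rw [Ideal.span_le]
  rintro _ ⟨i, hi, rfl⟩
  rw [← add_sub_cancel (g i) (f i)]
  exact Ideal.add_mem _ (Ideal.mem_sup_left (Ideal.subset_span ⟨i, hi, rfl⟩))
    (Ideal.mem_sup_right (h i hi))

namespace IsLocalRing

variable {R : Type*} [CommRing R] [IsLocalRing R] {x : R}

theorem pow_mem_of_pow_mem_sup_span_pow {I : Ideal R} (hx : x ∈ maximalIdeal R) {N n : ℕ}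
    (hNn : N < n) (h : x ^ N ∈ I ⊔ Ideal.span {x ^ n}) : x ^ N ∈ I := by
  obtain ⟨a, ha, b, hb, hab⟩ := Submodule.mem_sup.1 h
  obtain ⟨r, rfl⟩ := Ideal.mem_span_singleton'.1 hb
  have hunit : IsUnit (1 - r * x ^ (n - N)) :=
    isUnit_one_sub_self_of_mem_nonunits _
      (Ideal.mul_mem_left _ r (Ideal.pow_mem_of_mem _ hx _ (Nat.sub_pos_of_lt hNn)))
  have hpow : x ^ n = x ^ N * x ^ (n - N) := by rw [← pow_add, Nat.add_sub_cancel' hNn.le]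
  have hfactor : x ^ N * (1 - r * x ^ (n - N)) = a := by linear_combination -hab + r * hpow
  exact (Ideal.mul_unit_mem_iff_mem I hunit).1 (hfactor ▸ ha)

theorem subsingleton_setOf_sub_pow_mem {P : Ideal R} [hP : P.IsPrime] (hx : x ∈ maximalIdeal R)
    (hxP : x ∉ P) (y : R) : {n : ℕ | y - x ^ n ∈ P}.Subsingleton := by
  have key : ∀ {a b : ℕ}, a < b → y - x ^ a ∈ P → y - x ^ b ∈ P → False := by
    intro a b hab ha hb
    have hsup : x ^ a ∈ P ⊔ Ideal.span {x ^ b} := by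
      rw [show x ^ a = (y - x ^ b - (y - x ^ a)) + x ^ b by ring]
      exact Ideal.add_mem _ (Ideal.mem_sup_left (P.sub_mem hb ha))
        (Ideal.mem_sup_right (Ideal.mem_span_singleton_self _))
    exact hxP (hP.mem_of_pow_mem a (pow_mem_of_pow_mem_sup_span_pow hx hab hsup))
  intro a ha b hb
  by_contra hne
  rcases Nat.lt_or_gt_of_ne hne with h | h
  exacts [key h ha hb, key h hb ha]

theorem le_radical_of_le_sup_span_pow {I J : Ideal R} (hx : x ∈ maximalIdeal R) {N n : ℕ}
    (hNn : N < n) (hxI : x ^ N ∈ I) (hIJ : I ≤ J ⊔ Ideal.span {x ^ n}) : I ≤ J.radical := by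
  have hxJ : x ∈ J.radical := ⟨N, pow_mem_of_pow_mem_sup_span_pow hx hNn (hIJ hxI)⟩
  refine hIJ.trans (sup_le J.le_radical ?_)
  rw [Ideal.span_singleton_le_iff_mem]
  exact Ideal.pow_mem_of_mem _ hxJ n (by omega)

theorem eventually_radical_span_image_sub_pow_eq_maximalIdeal {ι : Type*} [DecidableEq ι]
    {f : ι → R} {s : Set ι} (hs : (Ideal.span (f '' s)).radical = maximalIdeal R)
    (hx : x ∈ maximalIdeal R) (j : ι) :
    ∀ᶠ n in atTop, (Ideal.span ((fun i => if i = j then f j - x ^ n else f i) '' s)).radical =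
      maximalIdeal R := by
  obtain ⟨N, hN⟩ : x ∈ (Ideal.span (f '' s)).radical := hs ▸ hx
  filter_upwards [eventually_gt_atTop N] with n hNn
  set g : ι → R := fun i => if i = j then f j - x ^ n else f i
  have hfg : ∀ i, f i - g i ∈ Ideal.span {x ^ n} := fun i => by
    by_cases hij : i = j <;> simp [g, hij]
  have hgf : ∀ i, g i - f i ∈ Ideal.span {x ^ n} := fun i => neg_sub (f i) (g i) ▸ neg_mem (hfg i)
  apply le_antisymm
  · rw [← hs, ← Ideal.radical_idem (Ideal.span (f '' s))]
    refine Ideal.radical_mono ((Ideal.span_image_le_sup_span_singleton fun i _ => hgf i).trans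
      (sup_le Ideal.le_radical ?_))
    rw [Ideal.span_singleton_le_iff_mem, hs]
    exact Ideal.pow_mem_of_mem _ hx n (by omega)
  · rw [← hs, ← Ideal.radical_idem (Ideal.span (g '' s))]
    exact Ideal.radical_mono (le_radical_of_le_sup_span_pow hx hNn hN
      (Ideal.span_image_le_sup_span_singleton fun i _ => hfg i))

end IsLocalRing

theorem sop_stable_under_substitution_general
    (A : Type*) [CommRing A] [IsLocalRing A]
    (d : ℕ)
    (x1 xj : A) (hx1m : x1 ∈ maximalIdeal A)
    (P : Ideal A) (hP : P.IsPrime) (hx1P : x1 ∉ P)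
    (x : Fin (d + 1) → A) (hx : ∀ i, x i ∈ maximalIdeal A) (j : Fin (d + 1))
    (hsop : ∀ t : Finset (Fin (d + 1)), t.card = d →
      (Ideal.span (x '' (t : Set (Fin (d + 1))))).radical = maximalIdeal A) :
    {n : ℕ | xj - x1 ^ n ∈ P}.Subsingleton ∧
    ∃ N : ℕ, ∀ n ≥ N, ∀ t : Finset (Fin (d + 1)), t.card = d →
      (Ideal.span ((fun i => if i = j then x j - x 0 ^ n else x i) ''
        (t : Set (Fin (d + 1))))).radical = maximalIdeal A := by
  refine ⟨subsingleton_setOf_sub_pow_mem (hP := hP) hx1m hx1P xj, eventually_atTop.1 ?_⟩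
  exact eventually_all.2 fun t => eventually_imp_distrib_left.2 fun ht =>
    eventually_radical_span_image_sub_pow_eq_maximalIdeal (hsop t ht) (hx 0) j

/-- In a Noetherian local ring of dimension `d ≥ 1`: if `x₁ ∉ P` for a prime `P` and
`x₁` is in the maximal ideal, then `x_j - x₁^n ∈ P` for at most one `n`. Consequently,
replacing `x_j` by `x_j - x₁^n` (indexing `x₁` by `0`) for `n` large preserves the property
that any `d` of the `d+1` elements form a system of parameters. -/
theorem sop_stable_under_substitution
    (A : Type*) [CommRing A] [IsLocalRing A] [IsNoetherianRing A]
    (d : ℕ) (hd : 1 ≤ d) (hdim : ringKrullDim A = d)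
    (x1 xj : A) (hx1m : x1 ∈ maximalIdeal A) (hxjm : xj ∈ maximalIdeal A)
    (P : Ideal A) (hP : P.IsPrime) (hx1P : x1 ∉ P)
    (x : Fin (d + 1) → A) (hx : ∀ i, x i ∈ maximalIdeal A) (j : Fin (d + 1)) (hj : j ≠ 0)
    (hsop : ∀ t : Finset (Fin (d + 1)), t.card = d →
      (Ideal.span (x '' (t : Set (Fin (d + 1))))).radical = maximalIdeal A) :
    {n : ℕ | xj - x1 ^ n ∈ P}.Subsingleton ∧
    ∃ N : ℕ, ∀ n ≥ N, ∀ t : Finset (Fin (d + 1)), t.card = d →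
      (Ideal.span ((fun i => if i = j then x j - x 0 ^ n else x i) ''
        (t : Set (Fin (d + 1))))).radical = maximalIdeal A :=
  sop_stable_under_substitution_general A d x1 xj hx1m P hP hx1P x hx j hsop
end

section
/- Let k be a field of characteristic p > 0 and let F = Σ_{a,b} F_{a,b} Y₁^a Y_j^b with coefficients F_{a,b} in a commutative ring, such that F_{a,b} = 0 whenever p ∤ a. Suppose there exist a, b with p ∤ b and F_{a,b} ≠ 0; let b₀ = min{b : p ∤ b and F_{a,b} ≠ 0 for some a} and a₀ = min{a : F_{a,b₀} ≠ 0}. Let n > a₀ with n ≡ 1 mod p, and define G_{a,b} by Σ F_{a,b} Y₁^a (Y_j + Y₁^n)^b = Σ G_{a,b} Y₁^a Y_j^b. Then G_{a₀+n, b₀−1} = b₀ · F_{a₀,b₀} ≠ 0. -/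
/-!
Since `a₀ < n`, only the terms `t = 0` and `t = 1` of the substitution formula contribute to the
coefficient of `Y₁^(a₀+n) Y_j^(b₀-1)`: they are `F (a₀+n) (b₀-1)` and `b₀ • F a₀ b₀`. The first
vanishes because `p ∣ a₀` (as `F a₀ b₀ ≠ 0`) and `n ≡ 1 mod p`, so `p ∤ a₀ + n`. The second is
nonzero because `b₀` is a unit of `k` and `R` is a `k`-vector space.
-/

open Finset

/-- The coefficient of `Y₁^a Y_j^b` in `Σ F a' b' • Y₁^a' (Y_j + Y₁^n)^b'`: the term `t` comes from
choosing `Y₁^n` in `t` of the `b + t` factors of `(Y_j + Y₁^n)^(b+t)`. -/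
def substCoeff {M : Type*} [AddCommMonoid M] (n : ℕ) (F : ℕ → ℕ → M) (a b : ℕ) : M :=
  ∑ t ∈ range (a + 1), if n * t ≤ a then (b + t).choose t • F (a - n * t) (b + t) else 0

theorem substCoeff_add_of_lt {M : Type*} [AddCommMonoid M] (F : ℕ → ℕ → M) {a n : ℕ}
    (h : a < n) (b : ℕ) :
    substCoeff n F (a + n) b = F (a + n) b + (b + 1) • F a (b + 1) := by
  unfold substCoeff
  rw [sum_eq_add_of_mem 0 1 (by simp) (by simp; omega) zero_ne_one]
  · simp [Nat.choose_one_right, show n ≤ a + n by omega]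
  · rintro t - ⟨ht₀, ht₁⟩
    have : ¬ n * t ≤ a + n := by
      have : 2 ≤ t := by omega
      nlinarith
    simp [this]

theorem nsmul_ne_zero_of_natCast_ne_zero (k : Type*) {M : Type*} [Field k] [AddCommGroup M]
    [Module k M] {m : ℕ} (hm : (m : k) ≠ 0) {x : M} (hx : x ≠ 0) : m • x ≠ 0 := by
  rw [← Nat.cast_smul_eq_nsmul k]
  exact smul_ne_zero hm hx

theorem coefficient_after_substitution_general
    (p : ℕ) (k : Type*) [Field k] [CharP k p]
    (R : Type*) [CommRing R] [Algebra k R]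
    (F : ℕ → ℕ → R) (hdvd : ∀ a b : ℕ, ¬ p ∣ a → F a b = 0)
    (b₀ a₀ n : ℕ)
    (hb₀ : IsLeast {b : ℕ | ¬ p ∣ b ∧ ∃ a, F a b ≠ 0} b₀)
    (ha₀ : IsLeast {a : ℕ | F a b₀ ≠ 0} a₀)
    (hn : a₀ < n) (hnp : n % p = 1)
    (G : ℕ → ℕ → R)
    (hG : ∀ a b : ℕ, G a b =
      ∑ t ∈ Finset.range (a + 1),
        if n * t ≤ a then ((b + t).choose t) • F (a - n * t) (b + t) else 0) :
    G (a₀ + n) (b₀ - 1) = b₀ • F a₀ b₀ ∧ G (a₀ + n) (b₀ - 1) ≠ 0 := by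
  have hF : F a₀ b₀ ≠ 0 := ha₀.1
  have hpb : ¬ p ∣ b₀ := hb₀.1.1
  obtain ⟨b, rfl⟩ : ∃ b, b₀ = b + 1 :=
    Nat.exists_eq_add_one.mpr (Nat.pos_of_ne_zero (by rintro rfl; exact hpb (dvd_zero p)))
  have hpa : p ∣ a₀ := by
    by_contra h
    exact hF (hdvd _ _ h)
  have hpn : ¬ p ∣ n := by
    rw [Nat.dvd_iff_mod_eq_zero]
    omega
  have hvanish : F (a₀ + n) b = 0 := hdvd _ _ fun h ↦ hpn ((Nat.dvd_add_right hpa).mp h)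
  have hval : G (a₀ + n) (b + 1 - 1) = (b + 1) • F a₀ (b + 1) := by
    rw [Nat.add_sub_cancel, hG, ← substCoeff, substCoeff_add_of_lt F hn, hvanish, zero_add]
  refine ⟨hval, hval ▸ nsmul_ne_zero_of_natCast_ne_zero k ?_ hF⟩
  exact_mod_cast mt (CharP.cast_eq_zero_iff k p _).mp hpb

/-- The key coefficient computation: substituting `Y_j ↦ Y_j + Y₁^n` in
`Σ F_{a,b} Y₁^a Y_j^b` (with `F_{a,b} = 0` whenever `p ∤ a`) produces a series
`Σ G_{a,b} Y₁^a Y_j^b` with `G_{a₀+n, b₀-1} = b₀ • F_{a₀,b₀} ≠ 0`, where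
`G a b = Σ_t C(b+t, t) • F (a - n t) (b + t)` (sum over `t` with `n t ≤ a`). -/
theorem coefficient_after_substitution
    (p : ℕ) (hp : p.Prime) (k : Type*) [Field k] [CharP k p]
    (R : Type*) [CommRing R] [Algebra k R]
    (F : ℕ → ℕ → R) (hdvd : ∀ a b : ℕ, ¬ p ∣ a → F a b = 0)
    (b₀ a₀ n : ℕ)
    (hb₀ : IsLeast {b : ℕ | ¬ p ∣ b ∧ ∃ a, F a b ≠ 0} b₀)
    (ha₀ : IsLeast {a : ℕ | F a b₀ ≠ 0} a₀)
    (hn : a₀ < n) (hnp : n % p = 1)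
    (G : ℕ → ℕ → R)
    (hG : ∀ a b : ℕ, G a b =
      ∑ t ∈ Finset.range (a + 1),
        if n * t ≤ a then ((b + t).choose t) • F (a - n * t) (b + t) else 0) :
    G (a₀ + n) (b₀ - 1) = b₀ • F a₀ b₀ ∧ G (a₀ + n) (b₀ - 1) ≠ 0 :=
  coefficient_after_substitution_general p k R F hdvd b₀ a₀ n hb₀ ha₀ hn hnp G hG
end

section
/- Let k be a field of characteristic p > 0, let R = k[[Y₁,...,Y_{d+1}]], and let f ∈ R with ∂f/∂Y₁ = 0. Suppose f has a nonzero coefficient on a monomial Y₁^{a₀}Y_j^{b₀} (times a monomial in the other variables) with p ∤ b₀, chosen as in the minimality conditions of Step 1. Then for suitable n ≡ 1 mod p with n > a₀, the power series g(Y₁,...,Y_{d+1}) := f(Y₁,...,Y_{j-1}, Y_j + Y₁^n, Y_{j+1},...,Y_{d+1}) satisfies ∂g/∂Y₁ ≠ 0. -/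
/-- The formal partial derivative of a multivariate power series with respect to
the variable `j`. -/
noncomputable def MvPowerSeries.pderiv' {σ R : Type*} [CommSemiring R]
    (j : σ) (f : MvPowerSeries σ R) : MvPowerSeries σ R :=
  fun m => (m j + 1) • f (m + Finsupp.single j 1)

/-- The result of substituting `Y_j ↦ Y_j + Y₁^n` (`Y₁` being the variable of index `0`)
in a multivariate power series. -/
noncomputable def MvPowerSeries.substAddPow {k : Type*} [CommRing k] {d : ℕ}
    (j : Fin (d + 1)) (n : ℕ) (f : MvPowerSeries (Fin (d + 1)) k) :
    MvPowerSeries (Fin (d + 1)) k :=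
  fun μ => ∑ t ∈ Finset.range (μ 0 + 1),
    if n * t ≤ μ 0 then
      ((μ j + t).choose t) • f (μ + Finsupp.single j t - Finsupp.single (0 : Fin (d + 1)) (n * t))
    else 0

/-
Since `∂f/∂Y₁ = 0`, every monomial of `f` has `Y₁`-exponent divisible by `p`; in particular `p ∣ a₀`.
Take `n = a₀ + 1`, let `Y₁^{a₀} Y_j^{b₀} Y^γ` be the chosen monomial and `c ≠ 0` its coefficient.
In `g`, the coefficient of `Y₁^{a₀+n} Y_j^{b₀-1} Y^γ` is `b₀ c` (from the linear term of
`(Y_j + Y₁^n)^{b₀}`) plus the coefficient of `f` at that same monomial, which vanishes because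
`p ∤ a₀ + n`; higher powers of `Y₁^n` overshoot since `n > a₀`. Differentiating in `Y₁` multiplies
this by `2a₀ + 1`, and `(2a₀ + 1) b₀ c ≠ 0` in `k`.
-/

theorem Finsupp.exists_eq_add_single_one {σ : Type*} {μ : σ →₀ ℕ} {i : σ} (h : μ i ≠ 0) :
    ∃ ν, μ = ν + single i 1 :=
  ⟨μ - single i 1, (tsub_add_cancel_of_le (single_le_iff.2 (Nat.one_le_iff_ne_zero.2 h))).symm⟩

namespace MvPowerSeries

open Finsupp

theorem coeff_pderiv' {σ R : Type*} [CommSemiring R] (i : σ) (f : MvPowerSeries σ R)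
    (m : σ →₀ ℕ) : coeff m (pderiv' i f) = (m i + 1) • coeff (m + single i 1) f :=
  rfl

theorem dvd_of_pderiv'_eq_zero {σ R : Type*} [CommSemiring R] [NoZeroDivisors R] (p : ℕ)
    [CharP R p] {i : σ} {f : MvPowerSeries σ R} (hf : pderiv' i f = 0) {ν : σ →₀ ℕ}
    (hν : coeff ν f ≠ 0) : p ∣ ν i := by
  rcases eq_or_ne (ν i) 0 with hνi | hνi
  · simp [hνi]
  obtain ⟨m, rfl⟩ := exists_eq_add_single_one hνi
  have h := congr(coeff m $hf)
  rw [coeff_pderiv', coeff_zero, nsmul_eq_mul, mul_eq_zero, or_iff_left hν] at h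
  simpa [← CharP.cast_eq_zero_iff R p] using h

theorem coeff_substAddPow_add_single_zero {k : Type*} [CommRing k] {d : ℕ} {j : Fin (d + 1)}
    (hj : j ≠ 0) (f : MvPowerSeries (Fin (d + 1)) k) {n : ℕ} (ν : Fin (d + 1) →₀ ℕ)
    (hn : ν 0 < n) :
    coeff (ν + single 0 n) (substAddPow j n f) =
      coeff (ν + single 0 n) f + (ν j + 1) • coeff (ν + single j 1) f := by
  have h0 : (ν + single 0 n : Fin (d + 1) →₀ ℕ) 0 = ν 0 + n := by simp
  have hjν : (ν + single 0 n : Fin (d + 1) →₀ ℕ) j = ν j := by simp [single_eq_of_ne hj]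
  rw [coeff_apply, substAddPow, h0, Finset.sum_eq_add_of_mem 0 1 (by simp) (by simp; omega)
    zero_ne_one]
  · rw [if_pos (by simp), if_pos (by omega), hjν, add_right_comm ν (single 0 n) (single j 1)]
    simp [coeff_apply]
  · intro t ht ⟨h0, h1⟩
    rw [if_neg]
    nlinarith [show 2 ≤ t by omega]

end MvPowerSeries

open MvPowerSeries Finsupp in
theorem pderiv_ne_zero_after_substitution_general
    (p : ℕ) (k : Type*) [Field k] [CharP k p] (d : ℕ)
    (f : MvPowerSeries (Fin (d + 1)) k) (j : Fin (d + 1)) (hj : j ≠ 0)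
    (hder : MvPowerSeries.pderiv' (0 : Fin (d + 1)) f = 0)
    (b₀ a₀ : ℕ)
    (hb₀ : IsLeast {b : ℕ | ¬ p ∣ b ∧
      ∃ μ : Fin (d + 1) →₀ ℕ, μ j = b ∧ MvPowerSeries.coeff μ f ≠ 0} b₀)
    (ha₀ : IsLeast {a : ℕ | ∃ μ : Fin (d + 1) →₀ ℕ,
      μ (0 : Fin (d + 1)) = a ∧ μ j = b₀ ∧ MvPowerSeries.coeff μ f ≠ 0} a₀) :
    ∃ n : ℕ, n % p = 1 ∧ a₀ < n ∧
      MvPowerSeries.pderiv' (0 : Fin (d + 1)) (MvPowerSeries.substAddPow j n f) ≠ 0 := by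
  obtain ⟨⟨hpb, -⟩, -⟩ := hb₀
  obtain ⟨⟨μ, hμ0, hμj, hμ⟩, -⟩ := ha₀
  have hp1 : p ≠ 1 := CharP.char_ne_one k p
  have hp_a₀ : p ∣ a₀ := hμ0 ▸ dvd_of_pderiv'_eq_zero p hder hμ
  have hp_odd : ¬ p ∣ 2 * a₀ + 1 := fun h =>
    hp1 (Nat.dvd_one.mp ((Nat.dvd_add_right (hp_a₀.mul_left 2)).mp h))
  have hμj0 : μ j ≠ 0 := by rintro h; simp [← hμj, h] at hpb
  obtain ⟨ν, rfl⟩ := exists_eq_add_single_one hμj0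
  have hν0 : ν 0 = a₀ := by simpa [single_eq_of_ne hj.symm] using hμ0
  have hνj : ν j + 1 = b₀ := by simpa using hμj
  refine ⟨a₀ + 1, ?_, a₀.lt_succ_self, fun hg => ?_⟩
  · rw [Nat.add_mod, Nat.mod_eq_zero_of_dvd hp_a₀, zero_add, Nat.mod_mod,
      Nat.one_mod_eq_one.2 hp1]
  have hvanish : coeff (ν + single 0 (a₀ + 1)) f = 0 := by
    by_contra h
    exact hp_odd (by simpa [hν0, two_mul, add_assoc] using dvd_of_pderiv'_eq_zero p hder h)
  have h := congr(coeff (ν + single 0 a₀) $hg)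
  rw [coeff_pderiv', coeff_zero, add_assoc, ← single_add,
    coeff_substAddPow_add_single_zero hj f ν (by omega), hvanish, zero_add, hνj, smul_smul,
    nsmul_eq_mul, mul_eq_zero, or_iff_left hμ] at h
  have hm : (ν + single 0 a₀ : Fin (d + 1) →₀ ℕ) 0 + 1 = 2 * a₀ + 1 := by simp [hν0, two_mul]
  rw [hm, Nat.cast_mul, mul_eq_zero, CharP.cast_eq_zero_iff k p, CharP.cast_eq_zero_iff k p] at h
  exact h.elim hp_odd hpb

/-- Step 1 of Claim 3.2: if `∂f/∂Y₁ = 0` but `f` has a nonzero coefficient on a monomial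
`Y₁^{a₀} Y_j^{b₀}` with `p ∤ b₀` (chosen minimally), then for suitable `n ≡ 1 mod p` with
`n > a₀`, the substitution `Y_j ↦ Y_j + Y₁^n` produces `g` with `∂g/∂Y₁ ≠ 0`. -/
theorem pderiv_ne_zero_after_substitution
    (p : ℕ) (hp : p.Prime) (k : Type*) [Field k] [CharP k p] (d : ℕ) (hd : 0 < d)
    (f : MvPowerSeries (Fin (d + 1)) k) (j : Fin (d + 1)) (hj : j ≠ 0)
    (hder : MvPowerSeries.pderiv' (0 : Fin (d + 1)) f = 0)
    (b₀ a₀ : ℕ)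
    (hb₀ : IsLeast {b : ℕ | ¬ p ∣ b ∧
      ∃ μ : Fin (d + 1) →₀ ℕ, μ j = b ∧ MvPowerSeries.coeff μ f ≠ 0} b₀)
    (ha₀ : IsLeast {a : ℕ | ∃ μ : Fin (d + 1) →₀ ℕ,
      μ (0 : Fin (d + 1)) = a ∧ μ j = b₀ ∧ MvPowerSeries.coeff μ f ≠ 0} a₀) :
    ∃ n : ℕ, n % p = 1 ∧ a₀ < n ∧
      MvPowerSeries.pderiv' (0 : Fin (d + 1)) (MvPowerSeries.substAddPow j n f) ≠ 0 :=
  pderiv_ne_zero_after_substitution_general p k d f j hj hder b₀ a₀ hb₀ ha₀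
end

section
/- Let (A, m, k) be a complete Noetherian local ring of equal characteristic p > 0 with k perfect. Then A has a unique coefficient field. -/
/-!
The coefficient field is given by the Teichmüller map: `x ↦ lim (lift of x^(1/p^n))^(p^n)`,
which converges because `a ≡ b mod I` implies `a^(p^n) ≡ b^(p^n) mod I^(n+1)`. It is always
multiplicative, and in characteristic `p` also additive since `(a + b)^(p^n) = a^(p^n) + b^(p^n)`.
Conversely, any multiplicative section `ψ` satisfies `ψ x = ψ (x^(1/p^n))^(p^n)`, so it is
approximated by the same sequence and therefore equals the Teichmüller map.
-/

namespace Perfection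

variable {p : ℕ} [Fact p.Prime] {R : Type*} [CommRing R] {I : Ideal R} [CharP (R ⧸ I) p]
  [IsAdicComplete I R]

theorem teichmuller₀_eq_apply_coeff_zero (ψ : R ⧸ I →* R)
    (hψ : ∀ y, Ideal.Quotient.mk I (ψ y) = y) (x : Perfection (R ⧸ I) p) :
    teichmuller₀ p I x = ψ (coeff _ p 0 x) :=
  teichmuller₀_spec fun n ↦ ⟨ψ (coeff _ p n x), hψ _, by
    rw [← map_pow, ← coeffMonoidHom_eq_coeff, coeffMonoidHom_pow_p_pow_self]; rfl⟩

theorem teichmuller₀_add [CharP R p] (x y : Perfection (R ⧸ I) p) :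
    teichmuller₀ p I (x + y) = teichmuller₀ p I x + teichmuller₀ p I y :=
  teichmuller₀_spec fun n ↦ ⟨(coeff _ p n x).out + (coeff _ p n y).out, by simp, by
    rw [add_pow_char_pow]
    exact ((teichmuller₀_sModEq (by simp)).add (teichmuller₀_sModEq (by simp))).symm⟩

variable (p I) in
noncomputable def teichmullerRingHom [CharP R p] : Perfection (R ⧸ I) p →+* R where
  __ := teichmuller₀ p I
  map_add' := teichmuller₀_add

end Perfection

open Perfection in
theorem Ideal.Quotient.existsUnique_section_of_perfectRing {p : ℕ} [Fact p.Prime] {R : Type*}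
    [CommRing R] [CharP R p] (I : Ideal R) [IsAdicComplete I R] [CharP (R ⧸ I) p]
    [PerfectRing (R ⧸ I) p] :
    ∃! φ : R ⧸ I →+* R, (Ideal.Quotient.mk I).comp φ = RingHom.id _ := by
  let ι := Perfection.lift p (R ⧸ I) (R ⧸ I) (RingHom.id _)
  have coeff_ι (y : R ⧸ I) : coeff _ p 0 (ι y) = y := rfl
  refine ⟨(teichmullerRingHom p I).comp ι, ?_, fun ψ hψ ↦ ?_⟩
  · ext y
    simp [teichmullerRingHom, coeff_ι]
  · ext y
    have := teichmuller₀_eq_apply_coeff_zero (ψ : R ⧸ I →* R) (fun y ↦ congr($hψ y)) (ι y)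
    simpa [teichmullerRingHom, coeff_ι] using this.symm

open IsLocalRing

theorem unique_coefficient_field_of_perfect_general
    (p : ℕ) (hp : p.Prime)
    (A : Type*) [CommRing A] [IsLocalRing A]
    [IsAdicComplete (maximalIdeal A) A] [CharP A p]
    [PerfectField (ResidueField A)] :
    ∃! φ : ResidueField A →+* A,
      (residue A).comp φ = RingHom.id (ResidueField A) := by
  have : Fact p.Prime := ⟨hp⟩
  have : CharP (ResidueField A) p :=
    .of_ringHom_of_ne_zero ((residue A).comp (ZMod.castHom dvd_rfl A)) p hp.ne_zero
  have : CharP (A ⧸ maximalIdeal A) p := ‹CharP (ResidueField A) p›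
  have : PerfectRing (A ⧸ maximalIdeal A) p := inferInstanceAs (PerfectRing (ResidueField A) p)
  exact Ideal.Quotient.existsUnique_section_of_perfectRing (maximalIdeal A)

/-- A complete Noetherian local ring of equal characteristic `p > 0` with perfect residue
field has a unique coefficient field. -/
theorem unique_coefficient_field_of_perfect
    (p : ℕ) (hp : p.Prime)
    (A : Type*) [CommRing A] [IsLocalRing A] [IsNoetherianRing A]
    [IsAdicComplete (maximalIdeal A) A] [CharP A p]
    [PerfectField (ResidueField A)] :
    ∃! φ : ResidueField A →+* A,
      (residue A).comp φ = RingHom.id (ResidueField A) :=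
  unique_coefficient_field_of_perfect_general p hp A
end
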